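/- arXiv:2511.22905 — 5 statements merged into one kernel-verified Lean document; each statement's English description precedes it below -/
import Mathlib

section
/- For any finite field F_q and nonzero polynomial F ∈ F_q[t] of degree N, the Euler totient function φ(F) = |F| · ∏_{P | F, P monic irreducible} (1 - |P|^{-1}) satisfies φ(F) ≥ C · q^N / (log(N+2))^2 for some absolute constant C > 0, and φ(F) ≤ q^N. -/
/-!
The upper bound holds because every factor `1 - |P|⁻¹` lies in `[0, 1]`. For the lower bound,
`1 - x ≥ exp (-2x)` on `[0, 1/2]` reduces it to bounding `∑_{P ∣ F} |P|⁻¹`. Distinct monic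
irreducibles of degree `d` divide `X^{q^d} - X`, so at most `q^d / d` of them occur; hence the
factors of degree at most `D = ⌊log₂ (N + 2)⌋` contribute at most the harmonic number `H_D`. As `F`
has at most `N < 2^{D+1}` distinct prime factors, those of larger degree contribute at most `1`.
So the sum is `≤ 2 + log D`, and `φ(F) ≥ e⁻⁴ qᴺ / D² ≥ e⁻⁴ qᴺ / (4 log² (N + 2))`.
-/

open Polynomial

/-- The Euler totient of a polynomial over `𝔽_q`:
`φ(F) = |F| ∏_{P ∣ F, P monic irreducible} (1 - |P|⁻¹)`, where the product runs over
the distinct monic irreducible (i.e. normalized prime) factors of `F`. -/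
noncomputable def polyTotient (𝔽 : Type) [Field 𝔽] [Fintype 𝔽] [DecidableEq 𝔽]
    (F : 𝔽[X]) : ℝ :=
  (Fintype.card 𝔽 : ℝ) ^ F.natDegree *
    ∏ P ∈ (UniqueFactorizationMonoid.normalizedFactors F).toFinset,
      (1 - ((Fintype.card 𝔽 : ℝ) ^ P.natDegree)⁻¹)

open Finset

namespace Real

theorem exp_neg_two_mul_le_one_sub {x : ℝ} (h0 : 0 ≤ x) (h1 : x ≤ 1 / 2) :
    exp (-(2 * x)) ≤ 1 - x := by
  rw [exp_neg, inv_le_comm₀ (exp_pos _) (by linarith)]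
  calc (1 - x)⁻¹ ≤ 1 + 2 * x := by
        rw [inv_le_iff_one_le_mul₀ (by linarith)]
        nlinarith
    _ ≤ exp (2 * x) := by linarith [add_one_le_exp (2 * x)]

theorem exp_neg_two_mul_sum_le_prod_one_sub {ι : Type*} (s : Finset ι) {x : ι → ℝ}
    (h0 : ∀ i ∈ s, 0 ≤ x i) (h1 : ∀ i ∈ s, x i ≤ 1 / 2) :
    exp (-(2 * ∑ i ∈ s, x i)) ≤ ∏ i ∈ s, (1 - x i) := by
  rw [mul_sum, ← sum_neg_distrib, exp_sum]
  exact prod_le_prod (fun i _ => (exp_pos _).le) fun i hi =>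
    exp_neg_two_mul_le_one_sub (h0 i hi) (h1 i hi)

theorem natLog_two_le_two_mul_log (n : ℕ) : (Nat.log 2 n : ℝ) ≤ 2 * log n := by
  have hlog2 : 1 / 2 < log 2 := by linarith [log_two_gt_d9]
  calc (Nat.log 2 n : ℝ) ≤ logb 2 n := by exact_mod_cast natLog_le_logb n 2
    _ = log n / log 2 := rfl
    _ ≤ 2 * log n := by
        rw [div_le_iff₀ (by linarith)]
        nlinarith [log_natCast_nonneg n]

end Real

theorem sum_inv_pow_le_one_add_harmonic {ι : Type*} (s : Finset ι) (f : ι → ℕ) {q D : ℕ}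
    (hq : 1 ≤ q) (hf : ∀ i ∈ s, 1 ≤ f i) (hcount : ∀ d, d * #{i ∈ s | f i = d} ≤ q ^ d)
    (hcard : #s ≤ q ^ (D + 1)) :
    ∑ i ∈ s, ((q : ℝ) ^ f i)⁻¹ ≤ 1 + harmonic D := by
  have hqR : (1 : ℝ) ≤ q := by exact_mod_cast hq
  rw [← sum_filter_not_add_sum_filter s (fun i => f i ≤ D) fun i => ((q : ℝ) ^ f i)⁻¹]
  gcongr ?_ + ?_
  · calc ∑ i ∈ s with ¬f i ≤ D, ((q : ℝ) ^ f i)⁻¹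
        ≤ ∑ i ∈ s with ¬f i ≤ D, ((q : ℝ) ^ (D + 1))⁻¹ := sum_le_sum fun i hi => by
          have hi : D + 1 ≤ f i := by simp only [mem_filter] at hi; omega
          gcongr
      _ ≤ ∑ _i ∈ s, ((q : ℝ) ^ (D + 1))⁻¹ :=
          sum_le_sum_of_subset_of_nonneg (filter_subset _ s) fun _ _ _ => by positivity
      _ = #s / (q : ℝ) ^ (D + 1) := by rw [sum_const, nsmul_eq_mul, div_eq_mul_inv]
      _ ≤ 1 := div_le_one_of_le₀ (by exact_mod_cast hcard) (by positivity)
  · have hmaps : ∀ i ∈ {i ∈ s | f i ≤ D}, f i ∈ Icc 1 D := fun i hi => by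
      simp only [mem_filter] at hi
      exact mem_Icc.2 ⟨hf i hi.1, hi.2⟩
    rw [← sum_fiberwise_of_maps_to hmaps, harmonic_eq_sum_Icc]
    push_cast
    refine sum_le_sum fun d hd => ?_
    have hd : (0 : ℝ) < d := by exact_mod_cast (mem_Icc.1 hd).1
    calc ∑ i ∈ {i ∈ s | f i ≤ D} with f i = d, ((q : ℝ) ^ f i)⁻¹
        ≤ ∑ i ∈ s with f i = d, ((q : ℝ) ^ f i)⁻¹ :=
          sum_le_sum_of_subset_of_nonneg (filter_subset_filter _ (filter_subset _ _))
            fun _ _ _ => by positivity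
      _ = #{i ∈ s | f i = d} / (q : ℝ) ^ d := by
          rw [sum_congr rfl fun i hi => by rw [(mem_filter.1 hi).2], sum_const, nsmul_eq_mul,
            div_eq_mul_inv]
      _ ≤ (d : ℝ)⁻¹ := by
          rw [div_le_iff₀ (by positivity), inv_mul_eq_div, le_div_iff₀ hd, mul_comm]
          exact_mod_cast hcount d

namespace Polynomial

variable {K : Type*} [Field K]

theorem isCoprime_of_monic_of_irreducible {P Q : K[X]} (hP : P.Monic) (hQ : Q.Monic)
    (hPi : Irreducible P) (hQi : Irreducible Q) (hne : P ≠ Q) : IsCoprime P Q :=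
  hPi.coprime_iff_not_dvd.2 fun h =>
    hne (eq_of_monic_of_associated hP hQ (hPi.associated_of_dvd hQi h))

theorem sum_natDegree_le_of_forall_dvd {S : Finset K[X]} {G : K[X]} (hG : G ≠ 0)
    (hS : ∀ P ∈ S, P.Monic ∧ Irreducible P) (hdvd : ∀ P ∈ S, P ∣ G) :
    ∑ P ∈ S, P.natDegree ≤ G.natDegree := by
  have hprod : ∏ P ∈ S, P ∣ G := prod_dvd_of_coprime (fun P hP Q hQ hne =>
    isCoprime_of_monic_of_irreducible (hS P hP).1 (hS Q hQ).1 (hS P hP).2 (hS Q hQ).2 hne) hdvd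
  rw [← natDegree_prod _ _ fun P hP => (hS P hP).2.ne_zero]
  exact natDegree_le_of_dvd hprod hG

theorem natDegree_mul_card_le_card_pow [Fintype K] {S : Finset K[X]} {d : ℕ}
    (hS : ∀ P ∈ S, P.Monic ∧ Irreducible P) (hd : ∀ P ∈ S, P.natDegree = d) :
    d * #S ≤ Fintype.card K ^ d := by
  rcases eq_or_ne d 0 with rfl | hd0
  · simp
  have hq : 1 < Fintype.card K := Fintype.one_lt_card
  calc d * #S = ∑ P ∈ S, P.natDegree := by
        rw [sum_congr rfl hd, sum_const, smul_eq_mul, mul_comm]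
    _ ≤ (X ^ Fintype.card K ^ d - X : K[X]).natDegree :=
        sum_natDegree_le_of_forall_dvd (FiniteField.X_pow_card_pow_sub_X_ne_zero K hd0 hq) hS
          fun P hP => by
            simpa [hd P hP, Nat.card_eq_fintype_card] using
              (hS P hP).2.natDegree_dvd_iff_dvd_X_pow_card_pow_sub_X.1 dvd_rfl
    _ = Fintype.card K ^ d := FiniteField.X_pow_card_pow_sub_X_natDegree_eq K hd0 hq

theorem inv_card_pow_natDegree_le_half [Fintype K] {P : K[X]} (hP : Irreducible P) :
    ((Fintype.card K : ℝ) ^ P.natDegree)⁻¹ ≤ 1 / 2 := by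
  have hq : (2 : ℝ) ≤ Fintype.card K := by exact_mod_cast Fintype.one_lt_card
  rw [one_div, inv_le_inv₀ (by positivity) two_pos]
  exact hq.trans (le_self_pow₀ (by linarith) hP.natDegree_pos.ne')

variable [Fintype K] [DecidableEq K]

open UniqueFactorizationMonoid in
theorem sum_inv_card_pow_natDegree_normalizedFactors_le {F : K[X]} (hF : F ≠ 0) :
    ∑ P ∈ (normalizedFactors F).toFinset, ((Fintype.card K : ℝ) ^ P.natDegree)⁻¹ ≤
      2 + Real.log (2 * Real.log (F.natDegree + 2)) := by
  set S := (normalizedFactors F).toFinset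
  set q := Fintype.card K
  set D := Nat.log 2 (F.natDegree + 2)
  have hmem : ∀ P ∈ S, P.Monic ∧ Irreducible P := fun P hP => by
    obtain ⟨hirr, hmon, -⟩ :=
      (Polynomial.mem_normalizedFactors_iff hF).1 (Multiset.mem_toFinset.1 hP)
    exact ⟨hmon, hirr⟩
  have hdeg : ∀ P ∈ S, 1 ≤ P.natDegree := fun P hP => (hmem P hP).2.natDegree_pos
  have hcard : #S ≤ q ^ (D + 1) :=
    calc #S ≤ ∑ P ∈ S, P.natDegree := by simpa using card_nsmul_le_sum S natDegree 1 hdeg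
      _ ≤ F.natDegree := sum_natDegree_le_of_forall_dvd hF hmem fun P hP =>
          dvd_of_mem_normalizedFactors (Multiset.mem_toFinset.1 hP)
      _ ≤ 2 ^ (D + 1) := (Nat.lt_pow_succ_log_self one_lt_two _).le.trans' (by omega)
      _ ≤ q ^ (D + 1) := Nat.pow_le_pow_left Fintype.one_lt_card _
  have hD : (0 : ℝ) < D := by exact_mod_cast Nat.log_pos one_lt_two (by omega)
  calc ∑ P ∈ S, ((q : ℝ) ^ P.natDegree)⁻¹ ≤ 1 + harmonic D :=
        sum_inv_pow_le_one_add_harmonic S natDegree Fintype.card_pos hdeg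
          (fun d => natDegree_mul_card_le_card_pow (fun P hP => hmem P (mem_filter.1 hP).1)
            fun P hP => (mem_filter.1 hP).2) hcard
    _ ≤ 2 + Real.log D := by linarith [harmonic_le_one_add_log D]
    _ ≤ 2 + Real.log (2 * Real.log (F.natDegree + 2)) := by
        gcongr
        exact_mod_cast Real.natLog_two_le_two_mul_log (F.natDegree + 2)

end Polynomial

theorem polyTotient_le (𝔽 : Type) [Field 𝔽] [Fintype 𝔽] [DecidableEq 𝔽] (F : 𝔽[X]) :
    polyTotient 𝔽 F ≤ (Fintype.card 𝔽 : ℝ) ^ F.natDegree := by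
  have hq : (1 : ℝ) ≤ Fintype.card 𝔽 := by exact_mod_cast Fintype.card_pos
  exact mul_le_of_le_one_right (by positivity) (prod_le_one
    (fun P _ => sub_nonneg.2 (inv_le_one_of_one_le₀ (one_le_pow₀ hq)))
    fun _ _ => sub_le_self _ (by positivity))

/-- `φ(F) ≥ C qᴺ / (log (N+2))²` for an absolute `C > 0`, and `φ(F) ≤ qᴺ`. -/
theorem stmt_2 :
    ∃ C : ℝ, 0 < C ∧
      ∀ (𝔽 : Type) [Field 𝔽] [Fintype 𝔽] [DecidableEq 𝔽],
        ∀ (N : ℕ) (F : 𝔽[X]), F ≠ 0 → F.natDegree = N →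
          C * (Fintype.card 𝔽 : ℝ) ^ N / (Real.log (N + 2)) ^ 2 ≤ polyTotient 𝔽 F ∧
          polyTotient 𝔽 F ≤ (Fintype.card 𝔽 : ℝ) ^ N := by
  refine ⟨Real.exp (-4) / 4, by positivity, fun 𝔽 _ _ _ N F hF hN => ?_⟩
  subst hN
  refine ⟨?_, polyTotient_le 𝔽 F⟩
  set L := Real.log (F.natDegree + 2)
  have hL : 0 < L := Real.log_pos (by norm_cast; omega)
  calc Real.exp (-4) / 4 * (Fintype.card 𝔽 : ℝ) ^ F.natDegree / L ^ 2
      = (Fintype.card 𝔽 : ℝ) ^ F.natDegree * Real.exp (-(2 * (2 + Real.log (2 * L)))) := by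
        rw [show -(2 * (2 + Real.log (2 * L))) = -4 - Real.log ((2 * L) ^ 2) by
          rw [Real.log_pow]; push_cast; ring, Real.exp_sub, Real.exp_log (by positivity)]
        ring
    _ ≤ polyTotient 𝔽 F := by
        refine mul_le_mul_of_nonneg_left ?_ (by positivity)
        refine (Real.exp_neg_two_mul_sum_le_prod_one_sub _ (fun _ _ => by positivity)
          fun P hP => inv_card_pow_natDegree_le_half
            (UniqueFactorizationMonoid.irreducible_of_normalized_factor P
              (Multiset.mem_toFinset.1 hP))).trans' ?_
        gcongr
        exact sum_inv_card_pow_natDegree_normalizedFactors_le hF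
end

section
/- Let q be a prime power and 1 ≤ d ≤ N integers. Then N · Ψ(N,d) = Σ_{k=1}^{d} Σ_{m ≤ N/k} Ψ(N - mk, d) · k · π_q(k), where Ψ(n,d) counts d-smooth monic polynomials of degree n and π_q(k) counts monic irreducible polynomials of degree k over F_q. -/
open Polynomial

/-- A polynomial is `d`-smooth if all its monic irreducible factors have degree at most `d`. -/
def IsSmooth (𝔽 : Type) [Field 𝔽] (d : ℕ) (F : 𝔽[X]) : Prop :=
  ∀ P : 𝔽[X], P.Monic → Irreducible P → P ∣ F → P.natDegree ≤ d

/-- `Ψ(n,d)`: the number of `d`-smooth monic polynomials of degree `n` over `𝔽_q`. -/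
noncomputable def Psi (𝔽 : Type) [Field 𝔽] [Fintype 𝔽] (n d : ℕ) : ℕ :=
  Nat.card {F : 𝔽[X] // F.Monic ∧ F.natDegree = n ∧ IsSmooth 𝔽 d F}

/-- `π_q(k)`: the number of monic irreducible polynomials of degree `k` over `𝔽_q`. -/
noncomputable def piq (𝔽 : Type) [Field 𝔽] [Fintype 𝔽] (k : ℕ) : ℕ :=
  Nat.card {P : 𝔽[X] // P.Monic ∧ Irreducible P ∧ P.natDegree = k}

/-!
Counting the prime powers dividing a monic `F` with multiplicity, weighted by degree, recovers
`deg F = ∑_{P^m ∣ F, m ≥ 1} deg P`. Summing this over the `d`-smooth monic `F` of degree `N`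
and exchanging the order of summation, each pair `(P, m)` with `deg P = k ≤ d` contributes
`k` times the number of smooth `F` divisible by `P^m`; writing `F = P^m G` shows that this
number is `Ψ(N - mk, d)`.
-/

open UniqueFactorizationMonoid Finset

open scoped Classical

theorem UniqueFactorizationMonoid.pow_dvd_iff_le_count_normalizedFactors {α : Type*}
    [CommMonoidWithZero α] [NormalizationMonoid α] [UniqueFactorizationMonoid α] [DecidableEq α]
    {p a : α} (hp : Irreducible p) (hnorm : normalize p = p) (ha : a ≠ 0) (m : ℕ) :
    p ^ m ∣ a ↔ m ≤ (normalizedFactors a).count p := by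
  rw [pow_dvd_iff_le_emultiplicity, emultiplicity_eq_count_normalizedFactors hp ha, hnorm,
    Nat.cast_le]

namespace Polynomial

section Factorization

variable {K : Type*} [Field K]

theorem monic_of_mem_normalizedFactors {P F : K[X]} (hP : P ∈ normalizedFactors F) :
    P.Monic :=
  normalize_normalized_factor P hP ▸
    monic_normalize (irreducible_of_normalized_factor P hP).ne_zero

theorem Monic.natDegree_eq_sum_count_normalizedFactors {F : K[X]} (hF : F.Monic) :
    F.natDegree =
      ∑ P ∈ (normalizedFactors F).toFinset, (normalizedFactors F).count P * P.natDegree := by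
  have hprod : (normalizedFactors F).prod = F := by
    rw [prod_normalizedFactors_eq hF.ne_zero, hF.normalize_eq_self]
  conv_lhs => rw [← hprod]
  rw [natDegree_multiset_prod_of_monic _ fun P hP => monic_of_mem_normalizedFactors hP,
    sum_multiset_map_count]
  rfl

theorem count_normalizedFactors_mul_natDegree_le {P F : K[X]} (hP : P.Monic)
    (hPirr : Irreducible P) (hF : F ≠ 0) :
    (normalizedFactors F).count P * P.natDegree ≤ F.natDegree := by
  have hdvd : P ^ (normalizedFactors F).count P ∣ F :=
    (pow_dvd_iff_le_count_normalizedFactors hPirr hP.normalize_eq_self hF _).2 le_rfl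
  simpa [natDegree_pow] using natDegree_le_of_dvd hdvd hF

/-- Truncating at `m ≤ deg F / deg P` loses no prime power `P ^ m` dividing `F`. -/
theorem card_filter_pow_dvd_eq_count_normalizedFactors {P F : K[X]} (hP : P.Monic)
    (hPirr : Irreducible P) (hF : F ≠ 0) :
    #{m ∈ Icc 1 (F.natDegree / P.natDegree) | P ^ m ∣ F} = (normalizedFactors F).count P := by
  have hle := count_normalizedFactors_mul_natDegree_le hP hPirr hF
  rw [← Nat.le_div_iff_mul_le hPirr.natDegree_pos] at hle
  have hfilter : {m ∈ Icc 1 (F.natDegree / P.natDegree) | P ^ m ∣ F} =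
      Icc 1 ((normalizedFactors F).count P) := by
    ext m
    simp only [mem_filter, mem_Icc,
      pow_dvd_iff_le_count_normalizedFactors hPirr hP.normalize_eq_self hF]
    omega
  rw [hfilter, Nat.card_Icc, Nat.add_sub_cancel]

end Factorization

theorem finite_setOf_natDegree_le {R : Type*} [Semiring R] [Finite R] (n : ℕ) :
    {F : R[X] | F.natDegree ≤ n}.Finite := by
  refine Set.Finite.of_finite_image (f := fun F (i : Fin (n + 1)) => F.coeff i) (Set.toFinite _)
    fun F hF G hG h => ?_
  ext i
  rcases lt_or_ge i (n + 1) with hi | hi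
  · exact congrFun h ⟨i, hi⟩
  · rw [coeff_eq_zero_of_natDegree_lt (lt_of_le_of_lt hF hi),
      coeff_eq_zero_of_natDegree_lt (lt_of_le_of_lt hG hi)]

end Polynomial

section Smooth

variable {𝔽 : Type} [Field 𝔽] {d : ℕ}

theorem isSmooth_of_natDegree_le {P : 𝔽[X]} (hP : P ≠ 0) (h : P.natDegree ≤ d) :
    IsSmooth 𝔽 d P :=
  fun _ _ _ hQP => (natDegree_le_of_dvd hQP hP).trans h

theorem IsSmooth.of_dvd {A B : 𝔽[X]} (hB : IsSmooth 𝔽 d B) (h : A ∣ B) :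
    IsSmooth 𝔽 d A :=
  fun Q hQ hQirr hQA => hB Q hQ hQirr (hQA.trans h)

theorem IsSmooth.mul {A B : 𝔽[X]} (hA : IsSmooth 𝔽 d A) (hB : IsSmooth 𝔽 d B) :
    IsSmooth 𝔽 d (A * B) :=
  fun Q hQ hQirr hQAB => (hQirr.prime.dvd_or_dvd hQAB).elim (hA Q hQ hQirr) (hB Q hQ hQirr)

theorem IsSmooth.pow {A : 𝔽[X]} (hA : IsSmooth 𝔽 d A) (m : ℕ) : IsSmooth 𝔽 d (A ^ m) :=
  fun Q hQ hQirr hQA => hA Q hQ hQirr (hQirr.prime.dvd_of_dvd_pow hQA)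

end Smooth

section FiniteField

variable (𝔽 : Type) [Field 𝔽] [Fintype 𝔽]

theorem finite_setOf_smooth (n d : ℕ) :
    {F : 𝔽[X] | F.Monic ∧ F.natDegree = n ∧ IsSmooth 𝔽 d F}.Finite :=
  (finite_setOf_natDegree_le n).subset fun _ hF => hF.2.1.le

theorem finite_setOf_monicIrreducible (k : ℕ) :
    {P : 𝔽[X] | P.Monic ∧ Irreducible P ∧ P.natDegree = k}.Finite :=
  (finite_setOf_natDegree_le k).subset fun _ hP => hP.2.2.le

noncomputable def smoothMonics (n d : ℕ) : Finset 𝔽[X] :=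
  (finite_setOf_smooth 𝔽 n d).toFinset

noncomputable def monicIrreducibles (k : ℕ) : Finset 𝔽[X] :=
  (finite_setOf_monicIrreducible 𝔽 k).toFinset

variable {𝔽}

@[simp]
theorem mem_smoothMonics {n d : ℕ} {F : 𝔽[X]} :
    F ∈ smoothMonics 𝔽 n d ↔ F.Monic ∧ F.natDegree = n ∧ IsSmooth 𝔽 d F := by
  simp [smoothMonics]

@[simp]
theorem mem_monicIrreducibles {k : ℕ} {P : 𝔽[X]} :
    P ∈ monicIrreducibles 𝔽 k ↔ P.Monic ∧ Irreducible P ∧ P.natDegree = k := by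
  simp [monicIrreducibles]

theorem card_smoothMonics (n d : ℕ) : #(smoothMonics 𝔽 n d) = Psi 𝔽 n d :=
  (Nat.card_eq_card_finite_toFinset (finite_setOf_smooth 𝔽 n d)).symm

theorem card_monicIrreducibles (k : ℕ) : #(monicIrreducibles 𝔽 k) = piq 𝔽 k :=
  (Nat.card_eq_card_finite_toFinset (finite_setOf_monicIrreducible 𝔽 k)).symm

theorem sum_count_normalizedFactors_of_isSmooth {d : ℕ} {F : 𝔽[X]} (hF : F.Monic)
    (hs : IsSmooth 𝔽 d F) :
    ∑ k ∈ Icc 1 d, ∑ P ∈ monicIrreducibles 𝔽 k, (normalizedFactors F).count P * k =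
      F.natDegree := by
  have hmaps : ∀ P ∈ (normalizedFactors F).toFinset, P.natDegree ∈ Icc 1 d := by
    intro P hP
    rw [Multiset.mem_toFinset] at hP
    have hPirr := irreducible_of_normalized_factor P hP
    exact mem_Icc.2 ⟨hPirr.natDegree_pos, hs P (monic_of_mem_normalizedFactors hP) hPirr
      (dvd_of_mem_normalizedFactors hP)⟩
  rw [hF.natDegree_eq_sum_count_normalizedFactors, ← sum_fiberwise_of_maps_to hmaps]
  refine sum_congr rfl fun k _ => ?_
  have hsub : {P ∈ (normalizedFactors F).toFinset | P.natDegree = k} ⊆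
      monicIrreducibles 𝔽 k := by
    intro P hP
    simp only [mem_filter, Multiset.mem_toFinset] at hP
    exact mem_monicIrreducibles.2 ⟨monic_of_mem_normalizedFactors hP.1,
      irreducible_of_normalized_factor P hP.1, hP.2⟩
  have hzero : ∀ P ∈ monicIrreducibles 𝔽 k,
      P ∉ {P ∈ (normalizedFactors F).toFinset | P.natDegree = k} →
        (normalizedFactors F).count P * k = 0 := fun P hP hPF => by
    rw [Multiset.count_eq_zero.2 fun h => hPF (mem_filter.2
      ⟨Multiset.mem_toFinset.2 h, (mem_monicIrreducibles.1 hP).2.2⟩), zero_mul]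
  rw [← sum_subset hsub hzero]
  exact sum_congr rfl fun P hP => by rw [(mem_filter.1 hP).2]

theorem sum_pow_dvd_eq_natDegree_of_isSmooth {d : ℕ} {F : 𝔽[X]} (hF : F.Monic)
    (hs : IsSmooth 𝔽 d F) :
    ∑ k ∈ Icc 1 d, ∑ m ∈ Icc 1 (F.natDegree / k), ∑ P ∈ monicIrreducibles 𝔽 k,
      (if P ^ m ∣ F then k else 0) = F.natDegree := by
  conv_rhs => rw [← sum_count_normalizedFactors_of_isSmooth hF hs]
  refine sum_congr rfl fun k _ => ?_
  rw [sum_comm]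
  refine sum_congr rfl fun P hP => ?_
  obtain ⟨hPm, hPirr, rfl⟩ := mem_monicIrreducibles.1 hP
  rw [sum_ite, sum_const_zero, add_zero, sum_const, smul_eq_mul,
    card_filter_pow_dvd_eq_count_normalizedFactors hPm hPirr hF.ne_zero]

theorem card_filter_dvd_smoothMonics {n d : ℕ} {Q : 𝔽[X]} (hQ : Q.Monic)
    (hQs : IsSmooth 𝔽 d Q) (hQn : Q.natDegree ≤ n) :
    #{F ∈ smoothMonics 𝔽 n d | Q ∣ F} = Psi 𝔽 (n - Q.natDegree) d := by
  rw [← card_smoothMonics]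
  symm
  refine card_bij (fun G _ => G * Q) (fun G hG => ?_)
    (fun _ _ _ _ => mul_right_cancel₀ hQ.ne_zero) fun F hF => ?_
  · obtain ⟨hGm, hGn, hGs⟩ := mem_smoothMonics.1 hG
    refine mem_filter.2 ⟨mem_smoothMonics.2 ⟨hGm.mul hQ, ?_, hGs.mul hQs⟩, dvd_mul_left Q G⟩
    rw [hGm.natDegree_mul hQ, hGn]
    omega
  · obtain ⟨hF', G, rfl⟩ := mem_filter.1 hF
    obtain ⟨hFm, hFn, hFs⟩ := mem_smoothMonics.1 hF'
    have hGm : G.Monic := hQ.of_mul_monic_left hFm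
    rw [hQ.natDegree_mul hGm] at hFn
    refine ⟨G, mem_smoothMonics.2 ⟨hGm, by omega, hFs.of_dvd (dvd_mul_left G Q)⟩, ?_⟩
    exact mul_comm G Q

theorem card_filter_pow_dvd_smoothMonics {N d k m : ℕ} {P : 𝔽[X]}
    (hP : P ∈ monicIrreducibles 𝔽 k) (hkd : k ≤ d) (hmk : m * k ≤ N) :
    #{F ∈ smoothMonics 𝔽 N d | P ^ m ∣ F} = Psi 𝔽 (N - m * k) d := by
  obtain ⟨hPm, hPirr, rfl⟩ := mem_monicIrreducibles.1 hP
  have hsmooth : IsSmooth 𝔽 d (P ^ m) := (isSmooth_of_natDegree_le hPirr.ne_zero hkd).pow m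
  rw [card_filter_dvd_smoothMonics (hPm.pow m) hsmooth (by rwa [natDegree_pow]), natDegree_pow]

end FiniteField

theorem stmt_4_general (𝔽 : Type) [Field 𝔽] [Fintype 𝔽]
    (N d : ℕ) :
    N * Psi 𝔽 N d =
      ∑ k ∈ Finset.Icc 1 d, ∑ m ∈ Finset.Icc 1 (N / k),
        Psi 𝔽 (N - m * k) d * (k * piq 𝔽 k) := by
  have hcount : ∀ k ∈ Icc 1 d, ∀ m ∈ Icc 1 (N / k), ∀ P ∈ monicIrreducibles 𝔽 k,
      ∑ F ∈ smoothMonics 𝔽 N d, (if P ^ m ∣ F then k else 0) =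
        Psi 𝔽 (N - m * k) d * k := by
    intro k hk m hm P hP
    have hmk : m * k ≤ N := (Nat.le_div_iff_mul_le (mem_Icc.1 hk).1).1 (mem_Icc.1 hm).2
    rw [sum_ite, sum_const_zero, add_zero, sum_const, smul_eq_mul,
      card_filter_pow_dvd_smoothMonics hP (mem_Icc.1 hk).2 hmk]
  calc N * Psi 𝔽 N d = ∑ _F ∈ smoothMonics 𝔽 N d, N := by
        rw [sum_const, smul_eq_mul, card_smoothMonics, mul_comm]
    _ = ∑ F ∈ smoothMonics 𝔽 N d, ∑ k ∈ Icc 1 d, ∑ m ∈ Icc 1 (N / k),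
          ∑ P ∈ monicIrreducibles 𝔽 k, (if P ^ m ∣ F then k else 0) := by
        refine sum_congr rfl fun F hF => ?_
        obtain ⟨hFm, rfl, hFs⟩ := mem_smoothMonics.1 hF
        exact (sum_pow_dvd_eq_natDegree_of_isSmooth hFm hFs).symm
    _ = ∑ k ∈ Icc 1 d, ∑ m ∈ Icc 1 (N / k), ∑ P ∈ monicIrreducibles 𝔽 k,
          ∑ F ∈ smoothMonics 𝔽 N d, (if P ^ m ∣ F then k else 0) := by
        rw [sum_comm]
        refine sum_congr rfl fun k _ => ?_
        rw [sum_comm]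
        exact sum_congr rfl fun m _ => sum_comm
    _ = _ := sum_congr rfl fun k hk => sum_congr rfl fun m hm => by
        rw [sum_congr rfl (hcount k hk m hm), sum_const, smul_eq_mul, card_monicIrreducibles]
        ring

/-- the Chebyshev–Hildebrand identity
`N·Ψ(N,d) = Σ_{k=1}^{d} Σ_{m ≤ N/k} Ψ(N-mk,d)·k·π_q(k)`. -/
theorem stmt_4 (𝔽 : Type) [Field 𝔽] [Fintype 𝔽]
    (N d : ℕ) (hd1 : 1 ≤ d) (hdN : d ≤ N) :
    N * Psi 𝔽 N d =
      ∑ k ∈ Finset.Icc 1 d, ∑ m ∈ Finset.Icc 1 (N / k),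
        Psi 𝔽 (N - m * k) d * (k * piq 𝔽 k) :=
  stmt_4_general 𝔽 N d
end

section
/- Let q be a prime power, K a monic polynomial of degree N over F_q, and 1 ≤ h ≤ N-1 an integer with h < N/2. Then every solution (F₁,F₂,G₁,G₂) ∈ I(K,h)^4 of F₁F₂ = G₁G₂ satisfies F₁ = G₁ or F₁ = G₂, where I(K,h) = {F monic of degree N : deg(F-K) ≤ h}. -/
/-!
Write `F = K + f` with `deg f ≤ h`. Then `F₁F₂ = G₁G₂` becomes
`K (f₁ + f₂ - g₁ - g₂) = g₁g₂ - f₁f₂`, whose right side has degree `≤ 2h < deg K`, so both sides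
vanish. Hence `f₁, f₂` and `g₁, g₂` have the same sum and product, i.e. they are the roots of the
same monic quadratic, and `f₁ ∈ {g₁, g₂}`.
-/

open Polynomial

theorem eq_or_eq_of_add_eq_add_of_mul_eq_mul {R : Type*} [CommRing R] [NoZeroDivisors R]
    {a b c d : R} (hsum : a + b = c + d) (hprod : a * b = c * d) : a = c ∨ a = d := by
  have hroots : (a - c) * (a - d) = 0 := by linear_combination a * hsum - hprod
  simpa only [mul_eq_zero, sub_eq_zero] using hroots

namespace Polynomial

variable {R : Type*} [CommRing R] [NoZeroDivisors R]

theorem eq_zero_of_mul_eq_of_degree_lt {K A B : R[X]} (hmul : K * A = B)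
    (hB : B.degree < K.degree) : A = 0 ∧ B = 0 := by
  have hB0 : B = 0 := eq_zero_of_dvd_of_degree_lt (Dvd.intro A hmul) hB
  have hK0 : K ≠ 0 := ne_zero_of_degree_gt hB
  exact ⟨(mul_eq_zero.mp (hmul.trans hB0)).resolve_left hK0, hB0⟩

theorem eq_or_eq_of_mul_eq_mul_of_degree_sub_le {K F₁ F₂ G₁ G₂ : R[X]} {h : ℕ}
    (hK : 2 * h < K.natDegree)
    (hF₁ : (F₁ - K).degree ≤ h) (hF₂ : (F₂ - K).degree ≤ h)
    (hG₁ : (G₁ - K).degree ≤ h) (hG₂ : (G₂ - K).degree ≤ h)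
    (heq : F₁ * F₂ = G₁ * G₂) : F₁ = G₁ ∨ F₁ = G₂ := by
  have hmul : K * ((F₁ - K) + (F₂ - K) - ((G₁ - K) + (G₂ - K))) =
      (G₁ - K) * (G₂ - K) - (F₁ - K) * (F₂ - K) := by
    linear_combination heq
  have hdeg : ((G₁ - K) * (G₂ - K) - (F₁ - K) * (F₂ - K)).natDegree ≤ 2 * h := by
    rw [← max_self (2 * h), two_mul]
    rw [← natDegree_le_iff_degree_le] at hF₁ hF₂ hG₁ hG₂
    exact natDegree_sub_le_of_le (natDegree_mul_le_of_le hG₁ hG₂)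
      (natDegree_mul_le_of_le hF₁ hF₂)
  obtain ⟨hsum, hprod⟩ :=
    eq_zero_of_mul_eq_of_degree_lt hmul (degree_lt_degree (hdeg.trans_lt hK))
  have hf := eq_or_eq_of_add_eq_add_of_mul_eq_mul (sub_eq_zero.mp hsum) (sub_eq_zero.mp hprod).symm
  simpa only [sub_left_inj] using hf

end Polynomial

theorem stmt_10_general (𝔽 : Type) [Field 𝔽]
    (N h : ℕ) (hlt : 2 * h < N)
    (K : 𝔽[X]) (hKdeg : K.natDegree = N)
    (F₁ F₂ G₁ G₂ : 𝔽[X])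
    (hF₁ : F₁.Monic ∧ F₁.natDegree = N ∧ (F₁ - K).degree ≤ (h : WithBot ℕ))
    (hF₂ : F₂.Monic ∧ F₂.natDegree = N ∧ (F₂ - K).degree ≤ (h : WithBot ℕ))
    (hG₁ : G₁.Monic ∧ G₁.natDegree = N ∧ (G₁ - K).degree ≤ (h : WithBot ℕ))
    (hG₂ : G₂.Monic ∧ G₂.natDegree = N ∧ (G₂ - K).degree ≤ (h : WithBot ℕ))
    (heq : F₁ * F₂ = G₁ * G₂) :
    F₁ = G₁ ∨ F₁ = G₂ :=
  eq_or_eq_of_mul_eq_mul_of_degree_sub_le (hKdeg ▸ hlt) hF₁.2.2 hF₂.2.2 hG₁.2.2 hG₂.2.2 heq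

/-- when `h < N/2`, the multiplicative energy of the short interval
`I(K,h)` consists only of diagonal solutions. -/
theorem stmt_10 (𝔽 : Type) [Field 𝔽] [Fintype 𝔽]
    (N h : ℕ) (hh1 : 1 ≤ h) (hhN : h ≤ N - 1) (hlt : 2 * h < N)
    (K : 𝔽[X]) (hK : K.Monic) (hKdeg : K.natDegree = N)
    (F₁ F₂ G₁ G₂ : 𝔽[X])
    (hF₁ : F₁.Monic ∧ F₁.natDegree = N ∧ (F₁ - K).degree ≤ (h : WithBot ℕ))
    (hF₂ : F₂.Monic ∧ F₂.natDegree = N ∧ (F₂ - K).degree ≤ (h : WithBot ℕ))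
    (hG₁ : G₁.Monic ∧ G₁.natDegree = N ∧ (G₁ - K).degree ≤ (h : WithBot ℕ))
    (hG₂ : G₂.Monic ∧ G₂.natDegree = N ∧ (G₂ - K).degree ≤ (h : WithBot ℕ))
    (heq : F₁ * F₂ = G₁ * G₂) :
    F₁ = G₁ ∨ F₁ = G₂ :=
  stmt_10_general 𝔽 N h hlt K hKdeg F₁ F₂ G₁ G₂ hF₁ hF₂ hG₁ hG₂ heq
end

section
/- Let q be a prime power, K a monic polynomial of degree N over F_q, and N/2 ≤ h ≤ N-1 an integer. Then the number of quadruples (F₁,F₂,G₁,G₂) ∈ I(K,h)^4 with F₁F₂ = G₁G₂, F₁ ≠ G₁, and F₁ ≠ G₂ is at most 2(h - ⌊N/2⌋ + 1) · q^{3h - N + 3}. -/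
/-!
Factor `F₁ = D A`, `G₁ = D B`, `F₂ = B C`, `G₂ = A C` with `A`, `B` monic of a common degree `a`
(the four-number theorem). As `F₁ - G₁ = D (A - B)` and `F₁ - G₂ = A (D - C)` are nonzero of
degree `≤ h`, we get `N - h ≤ a ≤ h` and `deg (B - A) ≤ h + a - N`; as `A D` lies within degree `h`
of `K`, `D` lies within degree `h - a` of `K /ₘ A`, and likewise `C` of `K /ₘ B`. So for each of the
`2h - N + 1` values of `a` the quadruple is determined by four polynomials ranging over spaces of
total dimension `a + (h + a + 1 - N) + 2 (h + 1 - a) = 3h + 3 - N`.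
-/

open Polynomial

theorem exists_eq_mul_of_mul_eq_mul {α : Type*} [CommMonoidWithZero α] [IsCancelMulZero α]
    [DecompositionMonoid α] {a b c d : α} (ha : a ≠ 0) (h : a * b = c * d) :
    ∃ w x y z, a = w * x ∧ b = y * z ∧ c = w * y ∧ d = x * z := by
  obtain ⟨w, x, ⟨y, rfl⟩, ⟨z, rfl⟩, rfl⟩ := exists_dvd_and_dvd_of_dvd_mul (Dvd.intro b h)
  refine ⟨w, x, y, z, rfl, mul_left_cancel₀ ha ?_, rfl, rfl⟩
  rw [h, mul_mul_mul_comm]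

namespace Polynomial

variable {R : Type*}

instance finite_degreeLT [Semiring R] [Finite R] (n : ℕ) : Finite (degreeLT R n) :=
  Finite.of_equiv _ (degreeLTEquiv R n).toEquiv.symm

theorem card_degreeLT [Semiring R] (n : ℕ) : Nat.card (degreeLT R n) = Nat.card R ^ n := by
  rw [Nat.card_congr (degreeLTEquiv R n).toEquiv, Nat.card_fun, Nat.card_fin]

theorem natDegree_add_le_of_degree_mul_le [Semiring R] [NoZeroDivisors R] {p q : R[X]} {n : ℕ}
    (hpq : p * q ≠ 0) (h : (p * q).degree ≤ n) : p.natDegree + q.natDegree ≤ n := by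
  rw [← natDegree_mul (left_ne_zero_of_mul hpq) (right_ne_zero_of_mul hpq)]
  exact natDegree_le_of_degree_le h

theorem degree_sub_le_of_degree_sub_le [Ring R] {p q r : R[X]} {n : ℕ}
    (hp : (p - r).degree ≤ n) (hq : (q - r).degree ≤ n) : (p - q).degree ≤ n := by
  rw [← sub_sub_sub_cancel_right p q r]
  exact (degree_sub_le _ _).trans (max_le hp hq)

theorem Monic.sub_X_pow_natDegree_mem_degreeLT [Ring R] {p : R[X]} (hp : p.Monic) :
    p - X ^ p.natDegree ∈ degreeLT R p.natDegree := by
  nontriviality R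
  have hdeg : p.degree = p.natDegree := degree_eq_natDegree hp.ne_zero
  rw [mem_degreeLT, ← hdeg]
  exact degree_sub_lt_left (by rw [hdeg, degree_X_pow]) hp.ne_zero
    (by rw [hp.leadingCoeff, (monic_X_pow _).leadingCoeff])

theorem sub_divByMonic_mem_degreeLT [CommRing R] {A D K : R[X]} {h : ℕ} (hA : A.Monic)
    (hAh : A.natDegree ≤ h) (hAD : (A * D - K).degree ≤ h) :
    D - K /ₘ A ∈ degreeLT R (h + 1 - A.natDegree) := by
  nontriviality R
  have hmod : (K %ₘ A).degree ≤ h := (degree_modByMonic_lt K hA).le.trans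
    ((degree_eq_natDegree hA.ne_zero).trans_le (by exact_mod_cast hAh))
  have hmul : (A * (D - K /ₘ A)).degree ≤ h := by
    have hsplit : A * (D - K /ₘ A) = (A * D - K) + K %ₘ A := by
      linear_combination (modByMonic_add_div K A).symm
    rw [hsplit]
    exact (degree_add_le _ _).trans (max_le hAD hmod)
  rw [mem_degreeLT]
  by_cases h0 : D - K /ₘ A = 0
  · rw [h0, degree_zero]; exact WithBot.bot_lt_coe _
  · have hdeg := natDegree_le_of_degree_le hmul
    rw [hA.natDegree_mul' h0] at hdeg
    rw [← natDegree_lt_iff_degree_lt h0]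
    omega

theorem exists_monic_eq_mul_of_mul_eq_mul {K : Type*} [Field K] {F₁ F₂ G₁ G₂ : K[X]}
    (hF₁ : F₁.Monic) (hG₁ : G₁.Monic) (h : F₁ * F₂ = G₁ * G₂) :
    ∃ D A B C : K[X], A.Monic ∧ B.Monic ∧
      F₁ = D * A ∧ F₂ = B * C ∧ G₁ = D * B ∧ G₂ = A * C := by
  obtain ⟨w, x, y, z, rfl, rfl, rfl, rfl⟩ := exists_eq_mul_of_mul_eq_mul hF₁.ne_zero h
  have hw : w ≠ 0 := left_ne_zero_of_mul hF₁.ne_zero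
  set u := w.leadingCoeff
  have hu : C u * C u⁻¹ = 1 := by rw [← C_mul, mul_inv_cancel₀ (leadingCoeff_ne_zero.2 hw), C_1]
  have hD : (w * C u⁻¹).Monic := monic_mul_leadingCoeff_inv hw
  have hx : w * x = w * C u⁻¹ * (C u * x) := by linear_combination (-(w * x)) * hu
  have hy : w * y = w * C u⁻¹ * (C u * y) := by linear_combination (-(w * y)) * hu
  refine ⟨w * C u⁻¹, C u * x, C u * y, C u⁻¹ * z, hD.of_mul_monic_left (hx ▸ hF₁),
    hD.of_mul_monic_left (hy ▸ hG₁), hx, ?_, hy, ?_⟩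
  · linear_combination (-(y * z)) * hu
  · linear_combination (-(x * z)) * hu

end Polynomial

section ShortInterval

variable {𝔽 : Type*} [Field 𝔽]

def shortInterval (K : 𝔽[X]) (N h : ℕ) : Set 𝔽[X] :=
  {F | F.Monic ∧ F.natDegree = N ∧ (F - K).degree ≤ h}

noncomputable def quadrupleParam (K : 𝔽[X]) (N h a : ℕ) :
    degreeLT 𝔽 a × degreeLT 𝔽 (h + a + 1 - N) × degreeLT 𝔽 (h + 1 - a) × degreeLT 𝔽 (h + 1 - a) →
      𝔽[X] × 𝔽[X] × 𝔽[X] × 𝔽[X] :=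
  fun e =>
    let A : 𝔽[X] := X ^ a + (e.1 : 𝔽[X])
    let B : 𝔽[X] := A + e.2.1
    let D := K /ₘ A + e.2.2.1
    let C := K /ₘ B + e.2.2.2
    (D * A, B * C, D * B, A * C)

variable {K : 𝔽[X]} {N h : ℕ}

theorem exists_mem_range_quadrupleParam {F₁ F₂ G₁ G₂ : 𝔽[X]}
    (hF₁ : F₁ ∈ shortInterval K N h) (hF₂ : F₂ ∈ shortInterval K N h)
    (hG₁ : G₁ ∈ shortInterval K N h) (hG₂ : G₂ ∈ shortInterval K N h)
    (hmul : F₁ * F₂ = G₁ * G₂) (hFG₁ : F₁ ≠ G₁) (hFG₂ : F₁ ≠ G₂) :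
    ∃ a ∈ Finset.Icc (N - h) h, (F₁, F₂, G₁, G₂) ∈ Set.range (quadrupleParam K N h a) := by
  obtain ⟨D, A, B, C, hA, hB, rfl, rfl, rfl, rfl⟩ :=
    exists_monic_eq_mul_of_mul_eq_mul hF₁.1 hG₁.1 hmul
  set a := A.natDegree
  have hD : D ≠ 0 := left_ne_zero_of_mul hF₁.1.ne_zero
  have hDA : D.natDegree + a = N := by rw [← natDegree_mul hD hA.ne_zero]; exact hF₁.2.1
  have hDB : D.natDegree + B.natDegree = N := by
    rw [← natDegree_mul hD hB.ne_zero]; exact hG₁.2.1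
  have hAB : A - B ≠ 0 := sub_ne_zero.2 fun h => hFG₁ (by rw [h])
  have hDC : D - C ≠ 0 := sub_ne_zero.2 fun h => hFG₂ (by rw [h, mul_comm])
  have h₁ : D.natDegree + (A - B).natDegree ≤ h := by
    refine natDegree_add_le_of_degree_mul_le (mul_ne_zero hD hAB) ?_
    rw [mul_sub]; exact degree_sub_le_of_degree_sub_le hF₁.2.2 hG₁.2.2
  have h₂ : a + (D - C).natDegree ≤ h := by
    refine natDegree_add_le_of_degree_mul_le (mul_ne_zero hA.ne_zero hDC) ?_
    rw [mul_sub, mul_comm A D]; exact degree_sub_le_of_degree_sub_le hF₁.2.2 hG₂.2.2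
  have hBA : B - A ∈ degreeLT 𝔽 (h + a + 1 - N) := by
    rw [mem_degreeLT, ← neg_sub, degree_neg]
    exact degree_le_natDegree.trans_lt (by exact_mod_cast (by omega : (A - B).natDegree < _))
  have hD' : D - K /ₘ A ∈ degreeLT 𝔽 (h + 1 - a) :=
    sub_divByMonic_mem_degreeLT hA (by omega) (mul_comm D A ▸ hF₁.2.2)
  have hC' : C - K /ₘ B ∈ degreeLT 𝔽 (h + 1 - a) := by
    rw [show a = B.natDegree by omega]
    exact sub_divByMonic_mem_degreeLT hB (by omega) hF₂.2.2
  refine ⟨a, Finset.mem_Icc.2 ⟨by omega, by omega⟩,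
    (⟨_, hA.sub_X_pow_natDegree_mem_degreeLT⟩, ⟨_, hBA⟩, ⟨_, hD'⟩, ⟨_, hC'⟩), ?_⟩
  simp only [quadrupleParam, a, add_sub_cancel]

theorem ncard_range_quadrupleParam_le [Fintype 𝔽] (K : 𝔽[X]) {a : ℕ}
    (ha : a ∈ Finset.Icc (N - h) h) :
    (Set.range (quadrupleParam K N h a)).ncard ≤ Fintype.card 𝔽 ^ (3 * h + 3 - N) := by
  rw [← Nat.card_coe_set_eq]
  refine (Finite.card_range_le _).trans_eq ?_
  rw [Finset.mem_Icc] at ha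
  simp only [Nat.card_prod, card_degreeLT, Nat.card_eq_fintype_card, ← pow_add]
  congr 1
  omega

def offDiagonalQuadruples (K : 𝔽[X]) (N h : ℕ) : Set (𝔽[X] × 𝔽[X] × 𝔽[X] × 𝔽[X]) :=
  {T | T.1 ∈ shortInterval K N h ∧ T.2.1 ∈ shortInterval K N h ∧
    T.2.2.1 ∈ shortInterval K N h ∧ T.2.2.2 ∈ shortInterval K N h ∧
    T.1 * T.2.1 = T.2.2.1 * T.2.2.2 ∧ T.1 ≠ T.2.2.1 ∧ T.1 ≠ T.2.2.2}

theorem ncard_offDiagonalQuadruples_le [Fintype 𝔽] (K : 𝔽[X]) (N h : ℕ) :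
    (offDiagonalQuadruples K N h).ncard ≤
      2 * (h - N / 2 + 1) * Fintype.card 𝔽 ^ (3 * h + 3 - N) := by
  have hcover : offDiagonalQuadruples K N h ⊆
      ⋃ a ∈ Finset.Icc (N - h) h, Set.range (quadrupleParam K N h a) :=
    fun T ⟨hF₁, hF₂, hG₁, hG₂, hmul, hne₁, hne₂⟩ =>
      let ⟨a, ha, hT⟩ := exists_mem_range_quadrupleParam hF₁ hF₂ hG₁ hG₂ hmul hne₁ hne₂
      Set.mem_biUnion ha hT
  calc (offDiagonalQuadruples K N h).ncard
      ≤ (⋃ a ∈ Finset.Icc (N - h) h, Set.range (quadrupleParam K N h a)).ncard :=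
      Set.ncard_le_ncard hcover
        ((Finset.Icc _ _).finite_toSet.biUnion fun _ _ => Set.finite_range _)
    _ ≤ ∑ a ∈ Finset.Icc (N - h) h, (Set.range (quadrupleParam K N h a)).ncard :=
      Finset.set_ncard_biUnion_le _ _
    _ ≤ ∑ _a ∈ Finset.Icc (N - h) h, Fintype.card 𝔽 ^ (3 * h + 3 - N) :=
      Finset.sum_le_sum fun a ha => ncard_range_quadrupleParam_le K ha
    _ ≤ 2 * (h - N / 2 + 1) * Fintype.card 𝔽 ^ (3 * h + 3 - N) := by
      rw [Finset.sum_const, Nat.card_Icc, smul_eq_mul]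
      gcongr
      omega

end ShortInterval

theorem stmt_11_general (𝔽 : Type) [Field 𝔽] [Fintype 𝔽]
    (N h : ℕ)
    (K : 𝔽[X]) :
    Nat.card {T : 𝔽[X] × 𝔽[X] × 𝔽[X] × 𝔽[X] //
        (T.1.Monic ∧ T.1.natDegree = N ∧ (T.1 - K).degree ≤ (h : WithBot ℕ)) ∧
        (T.2.1.Monic ∧ T.2.1.natDegree = N ∧ (T.2.1 - K).degree ≤ (h : WithBot ℕ)) ∧
        (T.2.2.1.Monic ∧ T.2.2.1.natDegree = N ∧
          (T.2.2.1 - K).degree ≤ (h : WithBot ℕ)) ∧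
        (T.2.2.2.Monic ∧ T.2.2.2.natDegree = N ∧
          (T.2.2.2 - K).degree ≤ (h : WithBot ℕ)) ∧
        T.1 * T.2.1 = T.2.2.1 * T.2.2.2 ∧
        T.1 ≠ T.2.2.1 ∧ T.1 ≠ T.2.2.2} ≤
      2 * (h - N / 2 + 1) * Fintype.card 𝔽 ^ (3 * h + 3 - N) :=
  (Nat.card_coe_set_eq _).trans_le (ncard_offDiagonalQuadruples_le K N h)

/-- off-diagonal multiplicative energy of the short interval `I(K,h)` is
at most `2(h - ⌊N/2⌋ + 1)·q^{3h-N+3}` when `N/2 ≤ h ≤ N-1`. -/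
theorem stmt_11 (𝔽 : Type) [Field 𝔽] [Fintype 𝔽]
    (N h : ℕ) (hh1 : 1 ≤ h) (hhN : h ≤ N - 1) (hge : N ≤ 2 * h)
    (K : 𝔽[X]) (hK : K.Monic) (hKdeg : K.natDegree = N) :
    Nat.card {T : 𝔽[X] × 𝔽[X] × 𝔽[X] × 𝔽[X] //
        (T.1.Monic ∧ T.1.natDegree = N ∧ (T.1 - K).degree ≤ (h : WithBot ℕ)) ∧
        (T.2.1.Monic ∧ T.2.1.natDegree = N ∧ (T.2.1 - K).degree ≤ (h : WithBot ℕ)) ∧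
        (T.2.2.1.Monic ∧ T.2.2.1.natDegree = N ∧
          (T.2.2.1 - K).degree ≤ (h : WithBot ℕ)) ∧
        (T.2.2.2.Monic ∧ T.2.2.2.natDegree = N ∧
          (T.2.2.2 - K).degree ≤ (h : WithBot ℕ)) ∧
        T.1 * T.2.1 = T.2.2.1 * T.2.2.2 ∧
        T.1 ≠ T.2.2.1 ∧ T.1 ≠ T.2.2.2} ≤
      2 * (h - N / 2 + 1) * Fintype.card 𝔽 ^ (3 * h + 3 - N) :=
  stmt_11_general 𝔽 N h K
end

section
/- Let q be a prime power and K a monic polynomial of degree N. Suppose F₁, F₂, G₁, G₂ are monic polynomials of degree N in I(K,h) with F₁F₂ = G₁G₂. Setting G = gcd(F₁,G₁) monic and writing F₁ = G·A, then deg A + deg(gcd(F₁,G₁) - gcd(F₂,G₂)) ≤ h whenever gcd(F₁,G₁) ≠ gcd(F₂,G₂); in particular deg G ≥ N - h in any off-diagonal solution. -/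
/-!
Write `G = gcd(F₁,G₁)`, `F₁ = G·A`, `G₁ = G·B`. Since `G` is the normalized gcd, `gcd(A,B) = 1`,
and cancelling `G` in `F₁F₂ = G₁G₂` gives `A·F₂ = B·G₂`. Hence
`A·gcd(F₂,G₂) = gcd(A·F₂, A·G₂) = gcd(B·G₂, A·G₂) = G₂`, so `F₁ - G₂ = A·(G - gcd(F₂,G₂))`.
As `F₁` and `G₂` both lie in `I(K,h)`, this difference has degree at most `h`; it vanishes only
when `F₁ = G₂`, and `deg G + deg A = N`.
-/

open Polynomial

theorem normalize_eq_self_of_mul_left {α : Type*} [CommMonoidWithZero α] [IsCancelMulZero α]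
    [StrongNormalizationMonoid α] {a b : α} (ha : a ≠ 0) (hna : normalize a = a)
    (hab : normalize (a * b) = a * b) : normalize b = b := by
  apply mul_left_cancel₀ ha
  rw [← hab, normalize_mul, hna]

theorem mul_gcd_eq_of_mul_eq_mul {α : Type*} [CommMonoidWithZero α] [StrongNormalizedGCDMonoid α]
    {F₁ F₂ G₁ G₂ A : α} (hF₁ : F₁ ≠ 0) (hnF₁ : normalize F₁ = F₁) (hnG₂ : normalize G₂ = G₂)
    (heq : F₁ * F₂ = G₁ * G₂) (hA : F₁ = gcd F₁ G₁ * A) : A * gcd F₂ G₂ = G₂ := by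
  set G := gcd F₁ G₁
  have hG : G ≠ 0 := gcd_ne_zero_of_left hF₁
  have hnG : normalize G = G := normalize_gcd F₁ G₁
  obtain ⟨B, hB⟩ : G ∣ G₁ := gcd_dvd_right F₁ G₁
  have hAB : gcd A B = 1 := by
    apply mul_left_cancel₀ hG
    calc G * gcd A B = gcd (G * A) (G * B) := by rw [gcd_mul_left, hnG]
      _ = G * 1 := by rw [← hA, ← hB, mul_one]
  have hnA : normalize A = A := normalize_eq_self_of_mul_left hG hnG (hA ▸ hnF₁)
  have hAF₂ : A * F₂ = B * G₂ := by
    apply mul_left_cancel₀ hG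
    rw [← mul_assoc, ← mul_assoc, ← hA, ← hB, heq]
  calc A * gcd F₂ G₂ = gcd (A * F₂) (A * G₂) := by rw [gcd_mul_left, hnA]
    _ = gcd (B * G₂) (A * G₂) := by rw [hAF₂]
    _ = G₂ := by rw [gcd_mul_right, gcd_comm, hAB, one_mul, hnG₂]

theorem Polynomial.natDegree_sub_le_of_degree_sub_le {R : Type*} [Ring R] {F G K : R[X]} {h : ℕ}
    (hF : (F - K).degree ≤ h) (hG : (G - K).degree ≤ h) : (F - G).natDegree ≤ h := by
  apply natDegree_le_of_degree_le
  rw [← sub_sub_sub_cancel_right F G K]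
  exact (degree_sub_le _ _).trans (max_le hF hG)

theorem stmt_12_general (𝔽 : Type) [Field 𝔽] [DecidableEq 𝔽]
    (N h : ℕ)
    (K : 𝔽[X])
    (F₁ F₂ G₁ G₂ : 𝔽[X])
    (hF₁ : F₁.Monic ∧ F₁.natDegree = N ∧ (F₁ - K).degree ≤ (h : WithBot ℕ))
    (hG₂ : G₂.Monic ∧ G₂.natDegree = N ∧ (G₂ - K).degree ≤ (h : WithBot ℕ))
    (heq : F₁ * F₂ = G₁ * G₂)
    (A : 𝔽[X]) (hA : F₁ = gcd F₁ G₁ * A) :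
    (gcd F₁ G₁ ≠ gcd F₂ G₂ →
      A.natDegree + (gcd F₁ G₁ - gcd F₂ G₂).natDegree ≤ h) ∧
    (F₁ ≠ G₁ → F₁ ≠ G₂ → N ≤ (gcd F₁ G₁).natDegree + h) := by
  obtain ⟨hF₁m, hF₁deg, hF₁K⟩ := hF₁
  have hG : gcd F₁ G₁ ≠ 0 := gcd_ne_zero_of_left hF₁m.ne_zero
  have hA0 : A ≠ 0 := right_ne_zero_of_mul (hA ▸ hF₁m.ne_zero)
  have hAH : A * gcd F₂ G₂ = G₂ :=
    mul_gcd_eq_of_mul_eq_mul hF₁m.ne_zero hF₁m.normalize_eq_self hG₂.1.normalize_eq_self heq hA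
  have hkey : F₁ - G₂ = A * (gcd F₁ G₁ - gcd F₂ G₂) := by linear_combination hA + hAH
  have hsmall : (F₁ - G₂).natDegree ≤ h := natDegree_sub_le_of_degree_sub_le hF₁K hG₂.2.2
  have hdeg : gcd F₁ G₁ ≠ gcd F₂ G₂ → A.natDegree + (gcd F₁ G₁ - gcd F₂ G₂).natDegree ≤ h := by
    intro hGH
    rwa [hkey, natDegree_mul hA0 (sub_ne_zero.mpr hGH)] at hsmall
  refine ⟨hdeg, fun _ hF₁G₂ => ?_⟩
  have hGH : gcd F₁ G₁ ≠ gcd F₂ G₂ := by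
    intro hGH
    exact hF₁G₂ (sub_eq_zero.mp (by rw [hkey, hGH, sub_self, mul_zero]))
  have := hdeg hGH
  rw [hA, natDegree_mul hG hA0] at hF₁deg
  omega

/-- in the GCD parametrization of a multiplicative-energy solution
`F₁F₂ = G₁G₂` inside the interval `I(K,h)`, writing `F₁ = gcd(F₁,G₁)·A`, one has
`deg A + deg(gcd(F₁,G₁) - gcd(F₂,G₂)) ≤ h` whenever the two gcds differ; in particular
`deg gcd(F₁,G₁) ≥ N - h` for any off-diagonal solution. -/
theorem stmt_12 (𝔽 : Type) [Field 𝔽] [Fintype 𝔽] [DecidableEq 𝔽]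
    (N h : ℕ) (hh1 : 1 ≤ h) (hhN : h ≤ N - 1)
    (K : 𝔽[X]) (hK : K.Monic) (hKdeg : K.natDegree = N)
    (F₁ F₂ G₁ G₂ : 𝔽[X])
    (hF₁ : F₁.Monic ∧ F₁.natDegree = N ∧ (F₁ - K).degree ≤ (h : WithBot ℕ))
    (hF₂ : F₂.Monic ∧ F₂.natDegree = N ∧ (F₂ - K).degree ≤ (h : WithBot ℕ))
    (hG₁ : G₁.Monic ∧ G₁.natDegree = N ∧ (G₁ - K).degree ≤ (h : WithBot ℕ))
    (hG₂ : G₂.Monic ∧ G₂.natDegree = N ∧ (G₂ - K).degree ≤ (h : WithBot ℕ))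
    (heq : F₁ * F₂ = G₁ * G₂)
    (A : 𝔽[X]) (hA : F₁ = gcd F₁ G₁ * A) :
    (gcd F₁ G₁ ≠ gcd F₂ G₂ →
      A.natDegree + (gcd F₁ G₁ - gcd F₂ G₂).natDegree ≤ h) ∧
    (F₁ ≠ G₁ → F₁ ≠ G₂ → N ≤ (gcd F₁ G₁).natDegree + h) :=
  stmt_12_general 𝔽 N h K F₁ F₂ G₁ G₂ hF₁ hG₂ heq A hA
end
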